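/- Let 𝒢 be a finite groupoid and ω a normalized U(1)-valued 3-cocycle on 𝒢, and let A = ℂ[Λ𝒢]^{t(ω)} be the twisted groupoid algebra of the loop groupoid with respect to the transgressed 2-cocycle t(ω). Then the linear map Δ : A → A ⊗_ℂ A defined on basis vectors by Δ(|g → a⟩) = Σ_{g₁, g₂ ∈ End_𝒢(s(a)), g₁g₂ = g} γ_a(g₁,g₂) |g₁ → a⟩ ⊗ |g₂ → a⟩ is multiplicative: Δ(x ⋆ y) = Δ(x) ⋆ Δ(y) for all x, y ∈ A (where A ⊗_ℂ A carries the componentwise product). -/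

import Mathlib

open CategoryTheory

/-- A normalized `U(1)`-valued 3-cocycle on a groupoid `G`. -/
structure ThreeCocycle (G : Type) [Groupoid.{0} G] : Type where
  toFun : ∀ {X Y Z W : G}, (X ⟶ Y) → (Y ⟶ Z) → (Z ⟶ W) → ℂ
  abs_toFun : ∀ {X Y Z W : G} (f : X ⟶ Y) (g : Y ⟶ Z) (h : Z ⟶ W),
    ‖toFun f g h‖ = 1
  cocycle : ∀ {X₀ X₁ X₂ X₃ X₄ : G} (f : X₀ ⟶ X₁) (g : X₁ ⟶ X₂) (h : X₂ ⟶ X₃) (k : X₃ ⟶ X₄),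
    toFun g h k * toFun f (g ≫ h) k * toFun f g h
      = toFun (f ≫ g) h k * toFun f g (h ≫ k)
  id_fst : ∀ {X Y Z : G} (g : X ⟶ Y) (h : Y ⟶ Z), toFun (𝟙 X) g h = 1
  id_snd : ∀ {X Y Z : G} (g : X ⟶ Y) (h : Y ⟶ Z), toFun g (𝟙 Y) h = 1
  id_thd : ∀ {X Y Z : G} (g : X ⟶ Y) (h : Y ⟶ Z), toFun g h (𝟙 Z) = 1

/-- Conjugation `a⁻¹ g a` of a loop `g ∈ End(X)` by a morphism `a : X ⟶ Y`. -/
def cnj {G : Type} [Groupoid.{0} G] {X Y : G} (g : X ⟶ X) (a : X ⟶ Y) : Y ⟶ Y :=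
  Groupoid.inv a ≫ g ≫ a

/-- `γ_a(g₁,g₂) = ω(g₁,g₂,a) ω(a, a⁻¹g₁a, a⁻¹g₂a) ω(g₁, a, a⁻¹g₂a)⁻¹`. -/
noncomputable def gam {G : Type} [Groupoid.{0} G] (ω : ThreeCocycle G)
    {X Y : G} (a : X ⟶ Y) (g₁ g₂ : X ⟶ X) : ℂ :=
  ω.toFun g₁ g₂ a * ω.toFun a (cnj g₁ a) (cnj g₂ a) * (ω.toFun g₁ a (cnj g₂ a))⁻¹

/-- The `S¹`-transgression `t(ω)` of a 3-cocycle `ω`, evaluated on the composable pair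
`(g → a, a⁻¹ga → b)` of morphisms of the loop groupoid `Λ𝒢`:
`t(ω)(g → a, a⁻¹ga → b) = ω(g,a,b) ω(a,b,(ab)⁻¹g(ab)) ω(a, a⁻¹ga, b)⁻¹`. -/
noncomputable def tOmega {G : Type} [Groupoid.{0} G] (ω : ThreeCocycle G)
    {X Y Z : G} (g : X ⟶ X) (a : X ⟶ Y) (b : Y ⟶ Z) : ℂ :=
  ω.toFun g a b * ω.toFun a b (cnj g (a ≫ b)) * (ω.toFun a (cnj g a) b)⁻¹

/-- The morphisms `(g → a)` of the loop groupoid `Λ𝒢`: a loop `g ∈ End(X)` together with a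
morphism `a : X ⟶ Y` of `𝒢`. -/
abbrev LMor (G : Type) [Groupoid.{0} G] : Type := Σ X Y : G, (X ⟶ X) × (X ⟶ Y)

section

variable {G : Type} [Groupoid.{0} G] [Fintype G]
    [∀ X Y : G, Fintype (X ⟶ Y)] [DecidableEq G] [∀ X Y : G, DecidableEq (X ⟶ Y)]

/-- The basis vector `|g → a⟩` of the twisted groupoid algebra `ℂ[Λ𝒢]^{t(ω)}`. -/
noncomputable def lbv (p : LMor G) : LMor G → ℂ := fun m => if m = p then 1 else 0

/-- The product of the twisted groupoid algebra `A = ℂ[Λ𝒢]^{t(ω)}`, on coordinates with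
respect to the basis `|g → a⟩`:
`|g → a⟩ ⋆ |g' → a'⟩ = δ_{g', a⁻¹ga} t(ω)(g → a, a⁻¹ga → a') |g → aa'⟩`. -/
noncomputable def lmul (ω : ThreeCocycle G) (x y : LMor G → ℂ) : LMor G → ℂ :=
  fun m => ∑ Y : G, ∑ a : m.1 ⟶ Y, ∑ b : Y ⟶ m.2.1,
    (if a ≫ b = m.2.2.2 then tOmega ω m.2.2.1 a b else 0) *
      x ⟨m.1, Y, (m.2.2.1, a)⟩ * y ⟨Y, m.2.1, (cnj m.2.2.1 a, b)⟩

/-- The basis vector `|g₁ → a₁⟩ ⊗ |g₂ → a₂⟩` of `A ⊗_ℂ A` (realized as functions on pairs). -/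
noncomputable def lbv2 (p : LMor G × LMor G) : LMor G × LMor G → ℂ :=
  fun m => if m = p then 1 else 0

/-- The componentwise product on `A ⊗_ℂ A`, realized as functions on pairs of morphisms of
`Λ𝒢`. -/
noncomputable def lmul2 (ω : ThreeCocycle G) (x y : LMor G × LMor G → ℂ) :
    LMor G × LMor G → ℂ :=
  fun m =>
    ∑ Y₁ : G, ∑ a₁ : m.1.1 ⟶ Y₁, ∑ b₁ : Y₁ ⟶ m.1.2.1,
    ∑ Y₂ : G, ∑ a₂ : m.2.1 ⟶ Y₂, ∑ b₂ : Y₂ ⟶ m.2.2.1,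
      (if a₁ ≫ b₁ = m.1.2.2.2 then tOmega ω m.1.2.2.1 a₁ b₁ else 0) *
      (if a₂ ≫ b₂ = m.2.2.2.2 then tOmega ω m.2.2.2.1 a₂ b₂ else 0) *
      x (⟨m.1.1, Y₁, (m.1.2.2.1, a₁)⟩, ⟨m.2.1, Y₂, (m.2.2.2.1, a₂)⟩) *
      y (⟨Y₁, m.1.2.1, (cnj m.1.2.2.1 a₁, b₁)⟩, ⟨Y₂, m.2.2.1, (cnj m.2.2.2.1 a₂, b₂)⟩)

/-- The comultiplication `Δ` of `A = ℂ[Λ𝒢]^{t(ω)}`: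
`Δ(|g → a⟩) = ∑_{g₁g₂ = g} γ_a(g₁,g₂) |g₁ → a⟩ ⊗ |g₂ → a⟩`. -/
noncomputable def Delta (ω : ThreeCocycle G) (x : LMor G → ℂ) : LMor G × LMor G → ℂ :=
  ∑ X : G, ∑ Y : G, ∑ a : X ⟶ Y, ∑ g₁ : X ⟶ X, ∑ g₂ : X ⟶ X,
    (gam ω a g₁ g₂ * x ⟨X, Y, (g₁ ≫ g₂, a)⟩) •
      lbv2 (⟨X, Y, (g₁, a)⟩, ⟨X, Y, (g₂, a)⟩)

end

/-!
`Δ` sends `|g → a⟩` to a combination of tensors `|g₁ → a⟩ ⊗ |g₂ → a⟩` over the same morphism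
`a`, so both `Δ(x ⋆ y)` and `Δx ⋆ Δy` vanish at pairs whose two factors have different underlying
morphisms. On a pair over the same morphism `c`, the product of `A ⊗ A` collapses to a single sum
over the factorizations `c = ab`, and comparing the two sides term by term leaves the identity
`γ_{ab}(g₁,g₂) t(ω)(g₁g₂; a, b) = t(ω)(g₁; a, b) t(ω)(g₂; a, b) γ_a(g₁,g₂) γ_b(a⁻¹g₁a, a⁻¹g₂a)`,
which is a product of six instances of the cocycle condition.
-/

theorem Fintype.sum_sigma_eq_single {ι M : Type*} {κ : ι → Type*} [Fintype ι]
    [∀ i, Fintype (κ i)] [AddCommMonoid M] {f : ∀ i, κ i → M} (i₀ : ι) (j₀ : κ i₀)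
    (h : ∀ i j, (⟨i, j⟩ : Sigma κ) ≠ ⟨i₀, j₀⟩ → f i j = 0) :
    ∑ i, ∑ j, f i j = f i₀ j₀ := by
  rw [← Fintype.sum_sigma' f]
  exact Fintype.sum_eq_single (⟨i₀, j₀⟩ : Sigma κ) fun x hne => h x.1 x.2 hne

theorem sigma_comp_congr {C : Type*} [Category C] {X₁ X₂ Z₁ Z₂ Y₁ Y₂ : C}
    {a₁ : X₁ ⟶ Z₁} {a₂ : X₂ ⟶ Z₂} {b₁ : Z₁ ⟶ Y₁} {b₂ : Z₂ ⟶ Y₂} {c₁ : X₁ ⟶ Y₁} {c₂ : X₂ ⟶ Y₂}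
    (ha : (⟨X₁, Z₁, a₁⟩ : Σ X Y : C, X ⟶ Y) = ⟨X₂, Z₂, a₂⟩)
    (hb : (⟨Z₁, Y₁, b₁⟩ : Σ X Y : C, X ⟶ Y) = ⟨Z₂, Y₂, b₂⟩)
    (hc₁ : a₁ ≫ b₁ = c₁) (hc₂ : a₂ ≫ b₂ = c₂) :
    (⟨X₁, Y₁, c₁⟩ : Σ X Y : C, X ⟶ Y) = ⟨X₂, Y₂, c₂⟩ := by
  subst hc₁ hc₂
  cases ha
  cases hb
  rfl

theorem ThreeCocycle.toFun_ne_zero {G : Type} [Groupoid.{0} G] (ω : ThreeCocycle G)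
    {X Y Z W : G} (f : X ⟶ Y) (g : Y ⟶ Z) (h : Z ⟶ W) : ω.toFun f g h ≠ 0 :=
  norm_ne_zero_iff.mp (by simp [ω.abs_toFun])

section Conjugation

variable {G : Type} [Groupoid.{0} G]

theorem comp_cnj {X Y : G} (g : X ⟶ X) (a : X ⟶ Y) : a ≫ cnj g a = g ≫ a := by
  simp [cnj, Groupoid.inv_eq_inv]

theorem cnj_comp {X Y Z : G} (g : X ⟶ X) (a : X ⟶ Y) (b : Y ⟶ Z) :
    cnj g (a ≫ b) = cnj (cnj g a) b := by
  simp [cnj, Groupoid.inv_eq_inv]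

theorem cnj_mul {X Y : G} (g₁ g₂ : X ⟶ X) (a : X ⟶ Y) :
    cnj (g₁ ≫ g₂) a = cnj g₁ a ≫ cnj g₂ a := by
  simp [cnj, Groupoid.inv_eq_inv]

theorem gam_comp_mul_tOmega (ω : ThreeCocycle G) {X Y Z : G} (u : X ⟶ Y) (v : Y ⟶ Z)
    (g₁ g₂ : X ⟶ X) :
    gam ω (u ≫ v) g₁ g₂ * tOmega ω (g₁ ≫ g₂) u v
      = tOmega ω g₁ u v * tOmega ω g₂ u v * gam ω u g₁ g₂ * gam ω v (cnj g₁ u) (cnj g₂ u) := by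
  have P₁ := ω.cocycle g₁ g₂ u v
  have P₂ := ω.cocycle g₁ u v (cnj (cnj g₂ u) v)
  have P₃ := ω.cocycle g₁ u (cnj g₂ u) v
  have P₄ := ω.cocycle u v (cnj (cnj g₁ u) v) (cnj (cnj g₂ u) v)
  have P₅ := ω.cocycle u (cnj g₁ u) v (cnj (cnj g₂ u) v)
  have P₆ := ω.cocycle u (cnj g₁ u) (cnj g₂ u) v
  simp only [comp_cnj] at P₂ P₃ P₄ P₅ P₆
  have h := congr($P₁ * $P₃.symm * $P₂ * $P₆ * $P₅.symm * $P₄)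
  -- The six values of `ω` in `h` that do not occur in the goal appear once on each side of `h`.
  have hI : ω.toFun g₁ (g₂ ≫ u) v * ω.toFun (g₁ ≫ u) v (cnj (cnj g₂ u) v) *
      ω.toFun g₁ u (cnj g₂ u ≫ v) * ω.toFun (g₁ ≫ u) (cnj g₂ u) v *
      ω.toFun u (cnj g₁ u ≫ v) (cnj (cnj g₂ u) v) * ω.toFun u (cnj g₁ u) (cnj g₂ u ≫ v) ≠ 0 := by
    simp [ω.toFun_ne_zero]
  simp only [gam, tOmega, cnj_comp, cnj_mul]
  field_simp [ω.toFun_ne_zero]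
  apply mul_left_cancel₀ hI
  linear_combination -h

end Conjugation

def LMor.arrow {G : Type} [Groupoid.{0} G] (m : LMor G) : Σ X Y : G, X ⟶ Y :=
  ⟨m.1, m.2.1, m.2.2.2⟩

theorem sum_sum_eq_sum_lMor {G M : Type} [Groupoid.{0} G] [Fintype G]
    [∀ X Y : G, Fintype (X ⟶ Y)] [AddCommMonoid M] (F : ∀ X Y : G, (X ⟶ Y) → (X ⟶ X) → M) :
    ∑ X : G, ∑ Y : G, ∑ a : X ⟶ Y, ∑ g : X ⟶ X, F X Y a g
      = ∑ m : LMor G, F m.1 m.2.1 m.2.2.2 m.2.2.1 := by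
  simp only [Fintype.sum_sigma, Fintype.sum_prod_type]
  exact Fintype.sum_congr _ _ fun X => Fintype.sum_congr _ _ fun Y => Finset.sum_comm

section Comultiplication

variable {G : Type} [Groupoid.{0} G] [Fintype G] [∀ X Y : G, Fintype (X ⟶ Y)]
  [DecidableEq G] [∀ X Y : G, DecidableEq (X ⟶ Y)] (ω : ThreeCocycle G)

theorem Delta_apply_mk (z : LMor G → ℂ) {X Y : G} (g₁ : X ⟶ X) (a : X ⟶ Y) (q : LMor G) :
    Delta ω z (⟨X, Y, (g₁, a)⟩, q)
      = ∑ g₂ : X ⟶ X,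
          if q = ⟨X, Y, (g₂, a)⟩ then gam ω a g₁ g₂ * z ⟨X, Y, (g₁ ≫ g₂, a)⟩ else 0 := by
  simp only [Delta, Finset.sum_apply, Pi.smul_apply, smul_eq_mul, lbv2, sum_sum_eq_sum_lMor,
    Sigma.eta, Prod.mk.eta]
  rw [Fintype.sum_eq_single ⟨X, Y, (g₁, a)⟩]
  · refine Fintype.sum_congr _ _ fun g₂ => ?_
    simp only [Prod.mk.injEq, true_and, mul_ite, mul_one, mul_zero]
  · intro m hm
    refine Fintype.sum_eq_zero _ fun g₂ => ?_
    rw [if_neg fun h => hm (Prod.mk.inj h).1.symm, mul_zero]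

theorem Delta_apply_of_arrow_ne (z : LMor G → ℂ) {p q : LMor G} (h : p.arrow ≠ q.arrow) :
    Delta ω z (p, q) = 0 := by
  obtain ⟨X, Y, g₁, a⟩ := p
  rw [Delta_apply_mk]
  refine Fintype.sum_eq_zero _ fun g₂ => if_neg ?_
  rintro rfl
  exact h rfl

theorem Delta_apply_mk_mk (z : LMor G → ℂ) {X Y : G} (g₁ g₂ : X ⟶ X) (a : X ⟶ Y) :
    Delta ω z (⟨X, Y, (g₁, a)⟩, ⟨X, Y, (g₂, a)⟩) = gam ω a g₁ g₂ * z ⟨X, Y, (g₁ ≫ g₂, a)⟩ := by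
  rw [Delta_apply_mk, Fintype.sum_eq_single g₂, if_pos rfl]
  intro g hg
  refine if_neg fun h => hg ?_
  simpa using h.symm

theorem lmul2_Delta_apply_of_arrow_ne (x y : LMor G → ℂ) {p q : LMor G}
    (h : p.arrow ≠ q.arrow) : lmul2 ω (Delta ω x) (Delta ω y) (p, q) = 0 := by
  obtain ⟨X₁, Y₁, g₁, c₁⟩ := p
  obtain ⟨X₂, Y₂, g₂, c₂⟩ := q
  refine Fintype.sum_eq_zero _ fun Z₁ => Fintype.sum_eq_zero _ fun a₁ =>
    Fintype.sum_eq_zero _ fun b₁ => Fintype.sum_eq_zero _ fun Z₂ =>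
    Fintype.sum_eq_zero _ fun a₂ => Fintype.sum_eq_zero _ fun b₂ => ?_
  dsimp only
  by_cases ha : LMor.arrow ⟨X₁, Z₁, (g₁, a₁)⟩ = LMor.arrow ⟨X₂, Z₂, (g₂, a₂)⟩
  · by_cases hb : LMor.arrow ⟨Z₁, Y₁, (cnj g₁ a₁, b₁)⟩ = LMor.arrow ⟨Z₂, Y₂, (cnj g₂ a₂, b₂)⟩
    · split_ifs with hc₁ hc₂
      · exact absurd (sigma_comp_congr ha hb hc₁ hc₂) h
      all_goals simp
    · rw [Delta_apply_of_arrow_ne ω y hb, mul_zero]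
  · rw [Delta_apply_of_arrow_ne ω x ha, mul_zero, zero_mul]

theorem lmul2_Delta_apply_mk_mk (x y : LMor G → ℂ) {X Y : G} (g₁ g₂ : X ⟶ X) (c : X ⟶ Y) :
    lmul2 ω (Delta ω x) (Delta ω y) (⟨X, Y, (g₁, c)⟩, ⟨X, Y, (g₂, c)⟩)
      = ∑ Z : G, ∑ a : X ⟶ Z, ∑ b : Z ⟶ Y,
          (if a ≫ b = c then tOmega ω g₁ a b * tOmega ω g₂ a b else 0) *
            Delta ω x (⟨X, Z, (g₁, a)⟩, ⟨X, Z, (g₂, a)⟩) *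
            Delta ω y (⟨Z, Y, (cnj g₁ a, b)⟩, ⟨Z, Y, (cnj g₂ a, b)⟩) := by
  refine Fintype.sum_congr _ _ fun Z => Fintype.sum_congr _ _ fun a =>
    Fintype.sum_congr _ _ fun b => ?_
  dsimp only
  rw [Fintype.sum_sigma_eq_single Z a, Fintype.sum_eq_single b]
  · split_ifs <;> ring
  · intro b' hb
    rw [Delta_apply_of_arrow_ne ω y, mul_zero]
    exact fun h => hb (by simpa [LMor.arrow] using h.symm)
  · intro Z' a' ha
    refine Fintype.sum_eq_zero _ fun b' => ?_
    rw [Delta_apply_of_arrow_ne ω x, mul_zero, zero_mul]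
    exact fun h => ha (sigma_mk_injective h).symm

end Comultiplication

/-- The comultiplication `Δ` of the twisted groupoid algebra
`A = ℂ[Λ𝒢]^{t(ω)}` is multiplicative: `Δ(x ⋆ y) = Δ(x) ⋆ Δ(y)` in `A ⊗_ℂ A` with the
componentwise product. -/
theorem Delta_multiplicative
    (G : Type) [Groupoid.{0} G] [Fintype G] [∀ X Y : G, Fintype (X ⟶ Y)]
    [DecidableEq G] [∀ X Y : G, DecidableEq (X ⟶ Y)]
    (ω : ThreeCocycle G) (x y : LMor G → ℂ) :
    Delta ω (lmul ω x y) = lmul2 ω (Delta ω x) (Delta ω y) := by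
  funext m
  obtain ⟨p, q⟩ := m
  by_cases h : p.arrow = q.arrow
  · obtain ⟨X, Y, g₁, c⟩ := p
    obtain ⟨X', Y', g₂, c'⟩ := q
    simp only [LMor.arrow, Sigma.mk.inj_iff] at h
    obtain ⟨rfl, ⟨⟩⟩ := h
    rw [Delta_apply_mk_mk, lmul2_Delta_apply_mk_mk]
    simp only [lmul, Finset.mul_sum, Delta_apply_mk_mk]
    refine Fintype.sum_congr _ _ fun Z => Fintype.sum_congr _ _ fun a =>
      Fintype.sum_congr _ _ fun b => ?_
    split_ifs with hc
    · rw [← hc, cnj_mul]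
      linear_combination (x ⟨X, Z, (g₁ ≫ g₂, a)⟩ * y ⟨Z, Y, (cnj g₁ a ≫ cnj g₂ a, b)⟩) *
        gam_comp_mul_tOmega ω a b g₁ g₂
    · simp
  · rw [Delta_apply_of_arrow_ne ω _ h, lmul2_Delta_apply_of_arrow_ne ω x y h]
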